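/- arXiv:math/9806046 — 3 statements merged into one kernel-verified Lean document; each statement's English description precedes it below -/
import Mathlib

section
/- Let D be a triangulated category and let B, C be strict full triangulated subcategories of D with Hom_D(B,C) = 0 for all B ∈ B, C ∈ C. Assume that for every object A of D there exists a distinguished triangle B → A → C → B[1] with B ∈ B and C ∈ C. Then the inclusion functor i_* : B → D admits a right adjoint i^! : D → B. -/
open CategoryTheory Limits Pretriangulated

universe v u

namespace CategoryTheory.Triangulated

variable (C : Type*) [Category C] [HasZeroObject C] [HasShift C ℤ]
  [Preadditive C] [∀ (n : ℤ), (shiftFunctor C n).Additive] [Pretriangulated C]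

/-- A triangulated subcategory of a pretriangulated category (the structure
`Triangulated.Subcategory` of the older Mathlib). -/
structure Subcategory where
  /-- the underlying predicate on objects of a triangulated subcategory -/
  P : ObjectProperty C
  zero' : ∃ (Z : C) (_ : IsZero Z), P Z
  shift (X : C) (n : ℤ) : P X → P (X⟦n⟧)
  ext₂' (T : Triangle C) (_ : T ∈ distTriang C) : P T.obj₁ → P T.obj₃ → P.isoClosure T.obj₂

end CategoryTheory.Triangulated

/-! If `X → A → Y → X⟦1⟧` is the decomposition triangle of `A`, then for `Z` in `B` the
exact sequence `Hom(Z, Y⟦-1⟧) → Hom(Z, X) → Hom(Z, A) → Hom(Z, Y)` has vanishing outer terms by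
semiorthogonality, so `X` represents `Hom(ι -, A)` on `B`; these representing objects assemble
into the right adjoint of `ι`. -/

namespace CategoryTheory

lemma Functor.rightAdjointObjIsDefined_of_bijective {C D : Type*} [Category C] [Category D]
    {F : C ⥤ D} {X : C} {Y : D} (f : F.obj X ⟶ Y)
    (hf : ∀ Z : C, Function.Bijective fun u : Z ⟶ X ↦ F.map u ≫ f) :
    F.rightAdjointObjIsDefined Y :=
  RepresentableBy.isRepresentable
    { homEquiv := Equiv.ofBijective _ (hf _)
      homEquiv_comp := by simp }

section

-- `CategoryTheory.` is needed: in the namespace of the lemma below, `shiftFunctor` would be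
-- `Triangle.shiftFunctor`.
variable {D : Type*} [Category D] [HasZeroObject D] [HasShift D ℤ] [Preadditive D]
  [∀ n : ℤ, Functor.Additive (CategoryTheory.shiftFunctor D n)] [Pretriangulated D]

lemma Pretriangulated.Triangle.bijective_comp_mor₁ (T : Triangle D) (hT : T ∈ distTriang D)
    {Z : D} (h₃ : ∀ g : Z ⟶ T.obj₃, g = 0) (h₃' : ∀ g : Z ⟶ T.obj₃⟦(-1 : ℤ)⟧, g = 0) :
    Function.Bijective fun u : Z ⟶ T.obj₁ ↦ u ≫ T.mor₁ := by
  refine ⟨(injective_iff_map_eq_zero (Preadditive.rightComp Z T.mor₁)).2 fun u hu ↦ ?_,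
    fun v ↦ ?_⟩
  · obtain ⟨w, rfl⟩ := coyoneda_exact₂ _ (inv_rot_of_distTriang _ hT) u hu
    obtain rfl : w = 0 := h₃' w
    exact zero_comp
  · obtain ⟨u, rfl⟩ := coyoneda_exact₂ _ hT v (h₃ _)
    exact ⟨u, rfl⟩

end

end CategoryTheory

/-- For a semiorthogonal pair `(B, C)` of strict full triangulated subcategories of a
triangulated category `D` such that every object admits a decomposition triangle
`B → A → C → B[1]`, the inclusion `i_* : B → D` admits a right adjoint. -/
theorem inclusion_left_part_isLeftAdjoint
    {D : Type u} [Category.{v} D] [HasZeroObject D] [HasShift D ℤ] [Preadditive D]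
    [∀ n : ℤ, (shiftFunctor D n).Additive] [Pretriangulated D] [IsTriangulated D]
    (B C : Triangulated.Subcategory D)
    [B.P.IsClosedUnderIsomorphisms] [C.P.IsClosedUnderIsomorphisms]
    (horth : ∀ (X Y : D), B.P X → C.P Y → ∀ f : X ⟶ Y, f = 0)
    (hdec : ∀ A : D, ∃ (X Y : D) (f : X ⟶ A) (g : A ⟶ Y) (h : Y ⟶ X⟦(1 : ℤ)⟧),
      B.P X ∧ C.P Y ∧ Triangle.mk f g h ∈ distTriang D) :
    B.P.ι.IsLeftAdjoint := by
  refine Functor.isLeftAdjoint_of_rightAdjointObjIsDefined_eq_top (funext fun A ↦ ?_)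
  obtain ⟨X, Y, f, g, h, hX, hY, hT⟩ := hdec A
  let X' : B.P.FullSubcategory := ⟨X, hX⟩
  refine eq_true (Functor.rightAdjointObjIsDefined_of_bijective (X := X') f fun Z ↦ ?_)
  have hmor₁ := Triangle.bijective_comp_mor₁ _ hT (horth _ _ Z.2 hY)
    (horth _ _ Z.2 (C.shift Y (-1) hY))
  exact hmor₁.comp (B.P.fullyFaithfulι.map_bijective Z X')
end

section
/- Let D be a triangulated category and let B, C be strict full triangulated subcategories of D with Hom_D(B,C) = 0 for all B ∈ B, C ∈ C. Assume C = B^⊥ (that is, A ∈ C if and only if Hom_D(B,A) = 0 for all B ∈ B) and that the inclusion functor i_* : B → D has a right adjoint i^! : D → B with counit ε. Then for every object A of D, the cone of the counit map ε_A : i_*(i^!(A)) → A belongs to C; in particular every A fits into a distinguished triangle B → A → C → B[1] with B ∈ B and C ∈ C. -/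
open CategoryTheory Limits Pretriangulated

universe v u

/-! Objects `X ∈ B` do not see the counit `ε_A : i_* i^! A → A`: composing with it is a bijection
`Hom(X, i_* i^! A) ≃ Hom(X, A)`, by adjunction and full faithfulness of `i_*`. Since `B` is stable
under shifts, the long exact `Hom(X, -)`-sequence of the triangle on `ε_A` then forces
`Hom(X, cone ε_A) = 0`, i.e. the cone lies in `B^⊥ = C`. -/

lemma CategoryTheory.Adjunction.comp_counit_bijective {C₀ D₀ : Type*} [Category C₀] [Category D₀]
    {L : C₀ ⥤ D₀} {R : D₀ ⥤ C₀} (adj : L ⊣ R) (hL : L.FullyFaithful) (X : C₀) (A : D₀) :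
    Function.Bijective (fun u : L.obj X ⟶ L.obj (R.obj A) => u ≫ adj.counit.app A) := by
  have h : (fun u : L.obj X ⟶ L.obj (R.obj A) => u ≫ adj.counit.app A) =
      (hL.homEquiv.symm.trans (adj.homEquiv X A).symm : _ → (L.obj X ⟶ A)) := by
    funext u
    simp [Adjunction.homEquiv_counit]
  exact h ▸ Equiv.bijective _

section

variable {D : Type u} [Category.{v} D] [HasShift D ℤ] [Preadditive D]
  [∀ n : ℤ, (CategoryTheory.shiftFunctor D n).Additive]

lemma eq_zero_of_comp_shift_map_eq_zero {X Y Y' : D} (v : Y ⟶ Y')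
    (hv : ∀ u : X⟦(-1 : ℤ)⟧ ⟶ Y, u ≫ v = 0 → u = 0)
    (g : X ⟶ Y⟦(1 : ℤ)⟧) (hg : g ≫ v⟦(1 : ℤ)⟧' = 0) : g = 0 := by
  let e : X⟦(-1 : ℤ)⟧⟦(1 : ℤ)⟧ ≅ X := (shiftFunctorCompIsoId D (-1) 1 (by omega)).app X
  obtain ⟨w, hw⟩ : ∃ w : X⟦(-1 : ℤ)⟧ ⟶ Y, w⟦(1 : ℤ)⟧' = e.hom ≫ g :=
    (shiftFunctor D (1 : ℤ)).map_surjective _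
  have hwv : w ≫ v = 0 := by
    rw [← (shiftFunctor D (1 : ℤ)).map_eq_zero_iff, Functor.map_comp, hw, Category.assoc, hg,
      comp_zero]
  rw [← cancel_epi e.hom, ← hw, hv w hwv, Functor.map_zero, comp_zero]

lemma CategoryTheory.Pretriangulated.Triangle.hom_to_obj₃_eq_zero
    [HasZeroObject D] [Pretriangulated D] {P : ObjectProperty D} [P.IsStableUnderShift ℤ]
    {T : Triangle D} (hT : T ∈ distTriang D)
    (hbij : ∀ X, P X → Function.Bijective (fun u : X ⟶ T.obj₁ => u ≫ T.mor₁))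
    {X : D} (hX : P X) (f : X ⟶ T.obj₃) : f = 0 := by
  have hf₃ : f ≫ T.mor₃ = 0 := by
    refine eq_zero_of_comp_shift_map_eq_zero T.mor₁ (fun u hu => ?_) _ ?_
    · exact (hbij _ (P.le_shift (-1) X hX)).1 (hu.trans zero_comp.symm)
    · rw [Category.assoc, comp_distTriang_mor_zero₃₁ _ hT, comp_zero]
  obtain ⟨t, rfl⟩ := Triangle.coyoneda_exact₃ T hT f hf₃
  obtain ⟨u, rfl⟩ := (hbij X hX).2 t
  simp only [Category.assoc, comp_distTriang_mor_zero₁₂ _ hT, comp_zero]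

end

/-- Let `(B, C)` be a semiorthogonal pair of strict full triangulated subcategories of
a triangulated category `D` with `C = B^⊥`, and suppose the inclusion `i_* : B → D`
has a right adjoint `i^!` with counit `ε`.  Then for every `A`, the cone of
`ε_A : i_*(i^!(A)) → A` lies in `C`; in particular every `A` fits into a distinguished
triangle `B → A → C → B[1]` with `B ∈ B` and `C ∈ C`. -/
theorem cone_of_counit_mem_right_part
    {D : Type u} [Category.{v} D] [HasZeroObject D] [HasShift D ℤ] [Preadditive D]
    [∀ n : ℤ, (shiftFunctor D n).Additive] [Pretriangulated D] [IsTriangulated D]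
    (B C : ObjectProperty D) [B.IsTriangulated] [C.IsTriangulated]
    [B.IsClosedUnderIsomorphisms] [C.IsClosedUnderIsomorphisms]
    (horth : ∀ (X Y : D), B X → C Y → ∀ f : X ⟶ Y, f = 0)
    (hC : ∀ A : D, C A ↔ (∀ X : D, B X → ∀ f : X ⟶ A, f = 0))
    (ibang : D ⥤ B.FullSubcategory)
    (adj : B.ι ⊣ ibang) :
    (∀ (A Z : D) (g : A ⟶ Z)
      (h : Z ⟶ (B.ι.obj (ibang.obj A))⟦(1 : ℤ)⟧),
      (Triangle.mk (adj.counit.app A) g h ∈ distTriang D) → C Z) ∧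
    (∀ A : D, ∃ (X Y : D) (f : X ⟶ A) (g : A ⟶ Y) (h : Y ⟶ X⟦(1 : ℤ)⟧),
      B X ∧ C Y ∧ Triangle.mk f g h ∈ distTriang D) := by
  have cone_mem : ∀ (A Z : D) (g : A ⟶ Z) (h : Z ⟶ (B.ι.obj (ibang.obj A))⟦(1 : ℤ)⟧),
      Triangle.mk (adj.counit.app A) g h ∈ distTriang D → C Z := fun A Z g h hT =>
    (hC Z).2 fun X hX f => Triangle.hom_to_obj₃_eq_zero hT
      (fun Y hY => adj.comp_counit_bijective B.fullyFaithfulι ⟨Y, hY⟩ A) hX f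
  refine ⟨cone_mem, fun A => ?_⟩
  obtain ⟨Z, g, h, hT⟩ := distinguished_cocone_triangle (adj.counit.app A)
  exact ⟨_, Z, _, g, h, (ibang.obj A).property, cone_mem A Z g h hT, hT⟩
end

section
/- Let k be a field, 𝒜 a k-linear abelian category with enough injectives in which all Ext groups Ext^i(A,N) (for the fixed object N below) are finite-dimensional over k. Let N, M ∈ 𝒜 and suppose there is an isomorphism Hom(M,A) ≅ Ext²(A,N)^* (k-linear dual), natural in A ∈ 𝒜. Assume Ext²(N,N) = 0. Then for every object A ∈ 𝒜 such that Hom(T,A) = 0 for all T ∈ 𝒜 with Hom(T,N) = 0 (i.e. A ∈ F), one has Ext²(A,N) = 0. -/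
open CategoryTheory Limits

universe w v u u'

/-- Let `k` be a field and `𝒜` a `k`-linear abelian category with enough injectives in
which the Ext groups `Ext^i(A,N)` are finite dimensional over `k`.  Suppose `M`
represents the functor `A ↦ Ext²(A,N)^*` (`k`-linear dual), naturally in `A`, and that
`Ext²(N,N) = 0`.  Then `Ext²(A,N) = 0` for every `A ∈ F = T^⊥`, where
`T = {T : Hom(T,N) = 0}`. -/
theorem ext_two_vanishes_on_torsionfree
    {k : Type u'} [Field k]
    {𝒜 : Type u} [Category.{v} 𝒜] [Abelian 𝒜] [Linear k 𝒜] [EnoughInjectives 𝒜]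
    [HasExt.{w} 𝒜]
    (N M : 𝒜)
    [∀ (A : 𝒜) (i : ℕ), Module k (Abelian.Ext A N i)]
    (hfin : ∀ (A : 𝒜) (i : ℕ), FiniteDimensional k (Abelian.Ext A N i))
    (e : ∀ A : 𝒜, (M ⟶ A) ≃ₗ[k] Module.Dual k (Abelian.Ext A N 2))
    (he : ∀ {A A' : 𝒜} (f : A ⟶ A') (g : M ⟶ A) (x : Abelian.Ext A' N 2),
      e A' (g ≫ f) x = e A g ((Abelian.Ext.mk₀ f).comp x (zero_add 2)))
    (hNN : Subsingleton (Abelian.Ext N N 2)) :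
    ∀ A : 𝒜, (∀ X : 𝒜, (∀ g : X ⟶ N, g = 0) → ∀ h : X ⟶ A, h = 0) →
      Subsingleton (Abelian.Ext A N 2) := by
  intro A hA
  -- Hom(M, N) = 0 since Ext²(N,N) = 0
  have hMN : ∀ g : M ⟶ N, g = 0 := by
    intro g
    apply (e N).injective
    rw [map_zero]
    ext x
    rw [Subsingleton.elim x 0, map_zero]
    rfl
  -- hence Hom(M, A) = 0 since A ∈ F
  have hMA : ∀ h : M ⟶ A, h = 0 := hA M hMN
  -- so the dual of Ext²(A,N) is trivial
  have hdual : ∀ f : Module.Dual k (Abelian.Ext A N 2), f = 0 := by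
    intro f
    obtain ⟨g, rfl⟩ := (e A).surjective f
    rw [hMA g, map_zero]
  have hz : ∀ z : Abelian.Ext A N 2, z = 0 := by
    intro z
    rw [← Module.forall_dual_apply_eq_zero_iff k]
    intro f
    rw [hdual f]
    rfl
  exact ⟨fun x y => by rw [hz x, hz y]⟩
end
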